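/- Main theorem: Let C ⊂ P(B(K),B(H)) be an mcs-cone. For a Hermiticity-preserving map Φ : B(K) → B(H), the following are equivalent: (1) Φ ∈ C; (2) Ψ*∘Φ is completely positive on B(K) for all Ψ ∈ C°; (3) Φ∘Ψ* is completely positive on B(H) for all Ψ ∈ C°. -/

import Mathlib

/-!
Write `Tr` for the trace of a linear map `B(K) → B(K)`. Directly from the definitions,
`Tr (Ψ* ∘ Φ)` is the complex conjugate of `⟨Ψ, Φ⟩`, and by cyclicity so is `Tr (Φ ∘ Ψ*)`.
Testing the Choi matrix of `Θ` against vectors shows that `Θ` is completely positive iff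
`Tr (Ad_V ∘ Θ) ≥ 0` for every `V`. If `Φ ∈ C` and `Ψ ∈ C°`, then
`Tr (Ad_V ∘ Ψ* ∘ Φ) = conj ⟨Ψ, Φ ∘ Ad_V⟩` and `Tr (Ad_V ∘ Φ ∘ Ψ*) = conj ⟨Ψ, Ad_V ∘ Φ⟩` are
nonnegative because `C` absorbs the completely positive maps `Ad_V`. Conversely, complete
positivity of `Ψ* ∘ Φ` or of `Φ ∘ Ψ*` gives `⟨Ψ, Φ⟩ ≥ 0` for all `Ψ ∈ C°`, and a closed convex
cone of Hermiticity-preserving maps is its own double dual: a Hahn–Banach functional separating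
`Φ` from `C` is `Re ⟨Ψ, ·⟩` for some `Ψ`, and symmetrising `Ψ` makes it Hermiticity preserving
without changing its values on Hermiticity-preserving maps.
-/

open Matrix BigOperators ComplexOrder
open scoped Kronecker ComplexConjugate

/-- Square complex matrices of size `d`, modeling `B(ℂ^d)`. -/
abbrev MatC (d : ℕ) := Matrix (Fin d) (Fin d) ℂ

/-- Hilbert–Schmidt (trace) inner product `⟨A, B⟩ = Tr (A B*)`. -/
noncomputable def hsInner {ι : Type*} [Fintype ι] (A B : Matrix ι ι ℂ) : ℂ :=
  (A * Bᴴ).trace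

/-- Inner product of linear maps: `⟨Φ, Ψ⟩ = Σ_{k,l} ⟨Φ f_{kl}, Ψ f_{kl}⟩`. -/
noncomputable def mapInner {a b : ℕ} (Φ Ψ : MatC a →ₗ[ℂ] MatC b) : ℂ :=
  ∑ k : Fin a, ∑ l : Fin a,
    hsInner (Φ (Matrix.single k l 1)) (Ψ (Matrix.single k l 1))

/-- The adjoint map `Φ*` w.r.t. the trace inner products, satisfying
`⟨A, Φ B⟩ = ⟨Φ* A, B⟩`. -/
noncomputable def adjointMap {a b : ℕ} (Φ : MatC a →ₗ[ℂ] MatC b) : MatC b →ₗ[ℂ] MatC a where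
  toFun A := Matrix.of fun k l => hsInner A (Φ (Matrix.single k l 1))
  map_add' := by
    intro A B; ext k l
    simp [hsInner, Matrix.add_mul]
  map_smul' := by
    intro c A; ext k l
    simp [hsInner, Matrix.smul_mul]

/-- The conjugation map `Ad_V : ρ ↦ V ρ V*`. -/
noncomputable def adMap {a b : ℕ} (V : Matrix (Fin b) (Fin a) ℂ) : MatC a →ₗ[ℂ] MatC b where
  toFun ρ := V * ρ * Vᴴ
  map_add' := by intro ρ σ; simp [Matrix.mul_add, Matrix.add_mul]
  map_smul' := by intro c ρ; simp [Matrix.mul_smul, Matrix.smul_mul]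

/-- The map `Φ ⊗ id_k` acting on `Matrix (Fin a × Fin k)`. -/
noncomputable def tensId {a b : ℕ} (Φ : MatC a →ₗ[ℂ] MatC b) (k : ℕ)
    (X : Matrix (Fin a × Fin k) (Fin a × Fin k) ℂ) :
    Matrix (Fin b × Fin k) (Fin b × Fin k) ℂ :=
  Matrix.of fun p q => Φ (Matrix.of fun i j => X (i, p.2) (j, q.2)) p.1 q.1

/-- `Φ` is `k`-positive if `Φ ⊗ id_k` preserves positive semidefiniteness. -/
def IsKPositive {a b : ℕ} (Φ : MatC a →ₗ[ℂ] MatC b) (k : ℕ) : Prop :=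
  ∀ X : Matrix (Fin a × Fin k) (Fin a × Fin k) ℂ, X.PosSemidef → (tensId Φ k X).PosSemidef

/-- `Φ` is completely positive if it is `k`-positive for all `k`. -/
def IsCompletelyPositive {a b : ℕ} (Φ : MatC a →ₗ[ℂ] MatC b) : Prop :=
  ∀ k : ℕ, IsKPositive Φ k

/-- Positive map: maps PSD matrices to PSD matrices. -/
def IsPosMap {a b : ℕ} (Φ : MatC a →ₗ[ℂ] MatC b) : Prop :=
  ∀ X : MatC a, X.PosSemidef → (Φ X).PosSemidef

/-- Hermiticity-preserving map. -/
def HermPreserving {a b : ℕ} (Φ : MatC a →ₗ[ℂ] MatC b) : Prop :=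
  ∀ X, Φ Xᴴ = (Φ X)ᴴ

/-- Choi–Jamiołkowski matrix `J(Φ) = Σ_{k,l} f_{kl} ⊗ Φ(f_{kl})`. -/
noncomputable def choi {a b : ℕ} (Φ : MatC a →ₗ[ℂ] MatC b) :
    Matrix (Fin a × Fin b) (Fin a × Fin b) ℂ :=
  ∑ k : Fin a, ∑ l : Fin a,
    (Matrix.single k l (1 : ℂ)) ⊗ₖ (Φ (Matrix.single k l 1))

noncomputable instance instTopMaps {a b : ℕ} : TopologicalSpace (MatC a →ₗ[ℂ] MatC b) :=
  TopologicalSpace.induced (fun Φ => (Φ : MatC a → MatC b)) inferInstance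

/-- A cone with a mapping cone symmetry (mcs-cone): a nonzero closed convex cone of
positive maps, stable under two-sided composition with completely positive maps. -/
def IsMcsCone {a b : ℕ} (C : Set (MatC a →ₗ[ℂ] MatC b)) : Prop :=
  (∃ Φ ∈ C, Φ ≠ 0) ∧ IsClosed C ∧
  (∀ Φ ∈ C, ∀ Ψ ∈ C, Φ + Ψ ∈ C) ∧
  (∀ Φ ∈ C, ∀ c : ℝ, 0 ≤ c → (c : ℂ) • Φ ∈ C) ∧
  (∀ Φ ∈ C, IsPosMap Φ) ∧
  (∀ Φ ∈ C, ∀ Υ : MatC b →ₗ[ℂ] MatC b, IsCompletelyPositive Υ →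
    ∀ Ω : MatC a →ₗ[ℂ] MatC a, IsCompletelyPositive Ω → Υ ∘ₗ Φ ∘ₗ Ω ∈ C)

/-- Dual cone inside Hermiticity-preserving maps. -/
def dualCone {a b : ℕ} (C : Set (MatC a →ₗ[ℂ] MatC b)) : Set (MatC a →ₗ[ℂ] MatC b) :=
  {Ψ | HermPreserving Ψ ∧ ∀ Φ ∈ C, 0 ≤ mapInner Ψ Φ}

section HilbertSchmidt

variable {ι : Type*} [Fintype ι]

lemma star_hsInner (A B : Matrix ι ι ℂ) : star (hsInner A B) = hsInner B A := by
  simp only [hsInner, ← Matrix.trace_conjTranspose, Matrix.conjTranspose_mul,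
    Matrix.conjTranspose_conjTranspose]

lemma hsInner_conjTranspose (A B : Matrix ι ι ℂ) : hsInner Aᴴ Bᴴ = hsInner B A := by
  rw [hsInner, hsInner, Matrix.conjTranspose_conjTranspose, Matrix.trace_mul_comm]

end HilbertSchmidt

lemma Matrix.posSemidef_of_forall_dotProduct_mulVec_nonneg {n : Type*} [Fintype n]
    {A : Matrix n n ℂ} (hA : ∀ x : n → ℂ, 0 ≤ star x ⬝ᵥ A *ᵥ x) : A.PosSemidef := by
  classical
  refine .of_dotProduct_mulVec_nonneg ?_ hA
  rw [← Matrix.isSymmetric_toEuclideanLin_iff, LinearMap.isSymmetric_iff_inner_map_self_real]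
  intro v
  have h : 0 ≤ inner ℂ v (A.toEuclideanLin v) := by
    simpa [EuclideanSpace.inner_eq_star_dotProduct, dotProduct_comm] using hA v
  exact (inner_conj_symm _ _).trans
    ((IsSelfAdjoint.of_nonneg h).star_eq.symm.trans (inner_conj_symm _ _))

section Trace

variable {a b : ℕ}

lemma trace_eq_sum_single (Θ : MatC a →ₗ[ℂ] MatC a) :
    LinearMap.trace ℂ (MatC a) Θ = ∑ k, ∑ l, Θ (Matrix.single k l 1) k l := by
  have repr_apply (M : MatC a) (k l : Fin a) :
      (Matrix.stdBasis ℂ (Fin a) (Fin a)).repr M (k, l) = M k l := by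
    simp [Matrix.stdBasis]
  rw [LinearMap.trace_eq_matrix_trace ℂ (Matrix.stdBasis ℂ (Fin a) (Fin a)), Matrix.trace,
    Fintype.sum_prod_type]
  simp only [Matrix.diag_apply, LinearMap.toMatrix_apply, Matrix.stdBasis_eq_single, repr_apply]

lemma trace_adjointMap_comp (Ψ Φ : MatC a →ₗ[ℂ] MatC b) :
    LinearMap.trace ℂ (MatC a) (adjointMap Ψ ∘ₗ Φ) = star (mapInner Ψ Φ) := by
  simp only [trace_eq_sum_single, mapInner, star_sum, star_hsInner, LinearMap.comp_apply]
  rfl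

end Trace

section CompletelyPositive

variable {a b c : ℕ}

lemma IsCompletelyPositive.comp {Θ : MatC b →ₗ[ℂ] MatC c} {Γ : MatC a →ₗ[ℂ] MatC b}
    (hΘ : IsCompletelyPositive Θ) (hΓ : IsCompletelyPositive Γ) :
    IsCompletelyPositive (Θ ∘ₗ Γ) :=
  fun k X hX => hΘ k _ (hΓ k X hX)

lemma isCompletelyPositive_sum {κ : Type*} (s : Finset κ) {Θ : κ → MatC a →ₗ[ℂ] MatC b}
    (h : ∀ r ∈ s, IsCompletelyPositive (Θ r)) : IsCompletelyPositive (∑ r ∈ s, Θ r) := by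
  intro k X hX
  have hsum : tensId (∑ r ∈ s, Θ r) k X = ∑ r ∈ s, tensId (Θ r) k X := by
    ext p q
    simp [tensId, Matrix.sum_apply]
  rw [hsum]
  exact Finset.sum_induction _ _ (fun _ _ => .add) .zero fun r hr => h r hr k X hX

lemma tensId_adMap (V : Matrix (Fin b) (Fin a) ℂ) (k : ℕ)
    (X : Matrix (Fin a × Fin k) (Fin a × Fin k) ℂ) :
    tensId (adMap V) k X
      = (V ⊗ₖ (1 : Matrix (Fin k) (Fin k) ℂ)) * X * (V ⊗ₖ (1 : Matrix (Fin k) (Fin k) ℂ))ᴴ := by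
  ext ⟨p₁, p₂⟩ ⟨q₁, q₂⟩
  simp only [tensId, adMap, LinearMap.coe_mk, AddHom.coe_mk, Matrix.of_apply, Matrix.mul_apply,
    Matrix.conjTranspose_apply, Matrix.kroneckerMap_apply, Fintype.sum_prod_type,
    Matrix.one_apply, mul_ite, mul_one, mul_zero, ite_mul, zero_mul, Complex.star_def,
    apply_ite (starRingEnd ℂ), _root_.map_zero, Finset.sum_ite_eq, Finset.mem_univ, if_true]

lemma isCompletelyPositive_adMap (V : Matrix (Fin b) (Fin a) ℂ) :
    IsCompletelyPositive (adMap V) := by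
  intro k X hX
  rw [tensId_adMap]
  exact hX.mul_mul_conjTranspose_same _

lemma isCompletelyPositive_id : IsCompletelyPositive (LinearMap.id : MatC a →ₗ[ℂ] MatC a) := by
  have hid : adMap (1 : Matrix (Fin a) (Fin a) ℂ) = LinearMap.id := LinearMap.ext fun ρ => by
    simp [adMap]
  exact hid ▸ isCompletelyPositive_adMap 1

lemma trace_nonneg_of_isCompletelyPositive {Θ : MatC a →ₗ[ℂ] MatC a}
    (hΘ : IsCompletelyPositive Θ) : 0 ≤ LinearMap.trace ℂ (MatC a) Θ := by
  -- `Ω = |ω⟩⟨ω|` is the maximally entangled matrix `∑ f_kl ⊗ f_kl`, and `⟨ω|(Θ ⊗ id)(Ω)|ω⟩ = Tr Θ`.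
  set ω : Fin a × Fin a → ℂ := fun p => if p.1 = p.2 then 1 else 0
  have hblock (k l : Fin a) :
      Matrix.of (fun i j => Matrix.vecMulVec ω (star ω) (i, k) (j, l)) = Matrix.single k l 1 := by
    ext i j
    simp only [ω, Matrix.vecMulVec_apply, Matrix.single_apply, Matrix.of_apply, Pi.star_apply]
    split_ifs <;> simp_all
  have h := (hΘ a _ (Matrix.posSemidef_vecMulVec_self_star ω)).dotProduct_mulVec_nonneg ω
  convert h using 1
  simp [ω, trace_eq_sum_single, tensId, hblock, dotProduct, Matrix.mulVec, Fintype.sum_prod_type]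

lemma choi_apply (Θ : MatC a →ₗ[ℂ] MatC b) (k l : Fin a) (i j : Fin b) :
    choi Θ (k, i) (l, j) = Θ (Matrix.single k l 1) i j := by
  simp [choi, Matrix.sum_apply, Matrix.single_apply, ite_and]

lemma dotProduct_choi_mulVec (Θ : MatC a →ₗ[ℂ] MatC b) (x : Fin a × Fin b → ℂ) :
    star x ⬝ᵥ choi Θ *ᵥ x
      = LinearMap.trace ℂ (MatC a) (adMap (Matrix.of fun k i => star (x (k, i))) ∘ₗ Θ) := by
  simp only [dotProduct, Matrix.mulVec, Fintype.sum_prod_type, choi_apply, trace_eq_sum_single,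
    LinearMap.comp_apply, adMap, LinearMap.coe_mk, AddHom.coe_mk, Matrix.mul_apply,
    Matrix.conjTranspose_apply, Matrix.of_apply, star_star, Pi.star_apply, Finset.mul_sum,
    Finset.sum_mul, mul_assoc]
  refine Finset.sum_congr rfl fun k _ => ?_
  rw [Finset.sum_comm]
  exact Finset.sum_congr rfl fun l _ => Finset.sum_comm

lemma isCompletelyPositive_of_choi_posSemidef {Θ : MatC a →ₗ[ℂ] MatC b}
    (h : (choi Θ).PosSemidef) : IsCompletelyPositive Θ := by
  obtain ⟨m, v, hv⟩ := Matrix.posSemidef_iff_eq_sum_vecMulVec.mp h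
  have hKraus : Θ = ∑ r, adMap (Matrix.of fun p k => v r (k, p)) := by
    refine (Matrix.stdBasis ℂ (Fin a) (Fin a)).ext fun ⟨k, l⟩ => ?_
    ext p q
    have hentry := congrFun (congrFun hv (k, p)) (l, q)
    rw [choi_apply] at hentry
    simp [hentry, Matrix.stdBasis_eq_single, adMap, Matrix.sum_apply, Matrix.vecMulVec_apply,
      Matrix.mul_apply, Matrix.single_apply, ite_and, ite_mul]
  rw [hKraus]
  exact isCompletelyPositive_sum _ fun r _ => isCompletelyPositive_adMap _

theorem isCompletelyPositive_iff_forall_trace_adMap_comp_nonneg {Θ : MatC a →ₗ[ℂ] MatC b} :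
    IsCompletelyPositive Θ ↔
      ∀ V : Matrix (Fin a) (Fin b) ℂ, 0 ≤ LinearMap.trace ℂ (MatC a) (adMap V ∘ₗ Θ) :=
  ⟨fun hΘ V => trace_nonneg_of_isCompletelyPositive ((isCompletelyPositive_adMap V).comp hΘ),
    fun h => isCompletelyPositive_of_choi_posSemidef <|
      Matrix.posSemidef_of_forall_dotProduct_mulVec_nonneg fun x =>
        (dotProduct_choi_mulVec Θ x).symm ▸ h _⟩

end CompletelyPositive

section PositiveMaps

variable {a b : ℕ} {Φ : MatC a →ₗ[ℂ] MatC b}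

open scoped MatrixOrder in
lemma IsPosMap.isHermitian_apply (hΦ : IsPosMap Φ) {A : MatC a} (hA : A.IsHermitian) :
    (Φ A).IsHermitian := by
  rw [← CFC.posPart_sub_negPart A hA.isSelfAdjoint, map_sub]
  exact (hΦ _ (Matrix.nonneg_iff_posSemidef.mp (CFC.posPart_nonneg A))).isHermitian.sub
    (hΦ _ (Matrix.nonneg_iff_posSemidef.mp (CFC.negPart_nonneg A))).isHermitian

lemma IsPosMap.hermPreserving (hΦ : IsPosMap Φ) : HermPreserving Φ := by
  intro X
  have hre : (realPart X : MatC a).IsHermitian := (realPart X).2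
  have him : (imaginaryPart X : MatC a).IsHermitian := (imaginaryPart X).2
  rw [← realPart_add_I_smul_imaginaryPart X]
  simp only [Matrix.conjTranspose_add, Matrix.conjTranspose_smul, map_add, map_smul, hre.eq,
    him.eq, (hΦ.isHermitian_apply hre).eq, (hΦ.isHermitian_apply him).eq]

end PositiveMaps

section Duality

variable {a b : ℕ}

lemma star_mapInner (Ψ Φ : MatC a →ₗ[ℂ] MatC b) : star (mapInner Ψ Φ) = mapInner Φ Ψ := by
  simp only [mapInner, star_sum, star_hsInner]

lemma mapInner_add_left (Ψ Ψ' Γ : MatC a →ₗ[ℂ] MatC b) :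
    mapInner (Ψ + Ψ') Γ = mapInner Ψ Γ + mapInner Ψ' Γ := by
  simp [mapInner, hsInner, Matrix.add_mul, Finset.sum_add_distrib]

lemma mapInner_smul_left (c : ℂ) (Ψ Γ : MatC a →ₗ[ℂ] MatC b) :
    mapInner (c • Ψ) Γ = c * mapInner Ψ Γ := by
  simp [mapInner, hsInner, Finset.mul_sum]

lemma eq_zero_of_re_mapInner_self_eq_zero {Ψ : MatC a →ₗ[ℂ] MatC b}
    (h : (mapInner Ψ Ψ).re = 0) : Ψ = 0 := by
  have hterm (k l : Fin a) : 0 ≤ hsInner (Ψ (Matrix.single k l 1)) (Ψ (Matrix.single k l 1)) :=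
    (Matrix.posSemidef_self_mul_conjTranspose _).trace_nonneg
  have hzero : mapInner Ψ Ψ = 0 := Complex.ext h (Complex.nonneg_iff.mp
    (Finset.sum_nonneg fun k _ => Finset.sum_nonneg fun l _ => hterm k l)).2.symm
  refine (Matrix.stdBasis ℂ (Fin a) (Fin a)).ext fun ⟨k, l⟩ => ?_
  have hkl : hsInner (Ψ (Matrix.single k l 1)) (Ψ (Matrix.single k l 1)) = 0 := by
    rw [mapInner, Finset.sum_eq_zero_iff_of_nonneg fun k _ =>
      Finset.sum_nonneg fun l _ => hterm k l] at hzero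
    exact (Finset.sum_eq_zero_iff_of_nonneg fun l _ => hterm k l).mp
      (hzero k (Finset.mem_univ _)) l (Finset.mem_univ _)
  simpa [Matrix.stdBasis_eq_single, hsInner, Matrix.trace_mul_conjTranspose_self_eq_zero_iff]
    using hkl

noncomputable def reMapInner : LinearMap.BilinForm ℝ (MatC a →ₗ[ℂ] MatC b) :=
  LinearMap.mk₂ ℝ (fun Ψ Γ => (mapInner Ψ Γ).re)
    (fun Ψ Ψ' Γ => by simp [mapInner, hsInner, Matrix.add_mul, Finset.sum_add_distrib])
    (fun r Ψ Γ => by simp [mapInner, hsInner, Complex.re_sum, Finset.mul_sum])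
    (fun Ψ Γ Γ' => by simp [mapInner, hsInner, Matrix.mul_add, Finset.sum_add_distrib])
    (fun r Ψ Γ => by simp [mapInner, hsInner, Complex.re_sum, Finset.mul_sum])

lemma reMapInner_apply (Ψ Γ : MatC a →ₗ[ℂ] MatC b) : reMapInner Ψ Γ = (mapInner Ψ Γ).re := rfl

lemma reMapInner_nondegenerate :
    (reMapInner : LinearMap.BilinForm ℝ (MatC a →ₗ[ℂ] MatC b)).Nondegenerate := by
  have hsymm (Ψ Γ : MatC a →ₗ[ℂ] MatC b) : reMapInner Ψ Γ = reMapInner Γ Ψ := by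
    rw [reMapInner_apply, reMapInner_apply, ← star_mapInner, Complex.star_def, Complex.conj_re]
  have hleft : (reMapInner (a := a) (b := b)).SeparatingLeft :=
    fun Ψ hΨ => eq_zero_of_re_mapInner_self_eq_zero (hΨ Ψ)
  exact ⟨hleft, fun Γ hΓ => hleft Γ fun Ψ => hsymm Γ Ψ ▸ hΓ Ψ⟩

instance : IsTopologicalAddGroup (MatC a →ₗ[ℂ] MatC b) :=
  Topology.IsInducing.topologicalAddGroup
    (LinearMap.ltoFun ℂ (MatC a) (MatC b) ℂ).toAddMonoidHom ⟨rfl⟩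

instance : ContinuousSMul ℝ (MatC a →ₗ[ℂ] MatC b) :=
  Topology.IsInducing.continuousSMul (g := LinearMap.ltoFun ℂ (MatC a) (MatC b) ℝ) (f := id)
    ⟨rfl⟩ continuous_id rfl

instance : LocallyConvexSpace ℝ (MatC b) :=
  inferInstanceAs (LocallyConvexSpace ℝ (Fin b → Fin b → ℂ))

instance : LocallyConvexSpace ℝ (MatC a →ₗ[ℂ] MatC b) :=
  Topology.IsInducing.locallyConvexSpace (f := LinearMap.ltoFun ℂ (MatC a) (MatC b) ℝ) ⟨rfl⟩

noncomputable def conjMap (Ψ : MatC a →ₗ[ℂ] MatC b) : MatC a →ₗ[ℂ] MatC b where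
  toFun X := (Ψ Xᴴ)ᴴ
  map_add' X Y := by simp
  map_smul' c X := by simp

lemma mapInner_conjMap (Ψ : MatC a →ₗ[ℂ] MatC b) {Γ : MatC a →ₗ[ℂ] MatC b}
    (hΓ : HermPreserving Γ) : mapInner (conjMap Ψ) Γ = star (mapInner Ψ Γ) := by
  have hsingle (k l : Fin a) : (Matrix.single k l (1 : ℂ))ᴴ = Matrix.single l k 1 := by
    simp [Matrix.conjTranspose_single]
  simp only [mapInner, conjMap, LinearMap.coe_mk, AddHom.coe_mk, star_sum, star_hsInner]
  rw [Finset.sum_comm]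
  refine Finset.sum_congr rfl fun l _ => Finset.sum_congr rfl fun k _ => ?_
  rw [hsingle, ← hsingle l k, hΓ, hsInner_conjTranspose]

noncomputable def hermPart (Ψ : MatC a →ₗ[ℂ] MatC b) : MatC a →ₗ[ℂ] MatC b :=
  (2⁻¹ : ℂ) • (Ψ + conjMap Ψ)

lemma hermPreserving_hermPart (Ψ : MatC a →ₗ[ℂ] MatC b) : HermPreserving (hermPart Ψ) := by
  intro X
  simp [hermPart, conjMap, add_comm]

lemma mapInner_hermPart (Ψ : MatC a →ₗ[ℂ] MatC b) {Γ : MatC a →ₗ[ℂ] MatC b}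
    (hΓ : HermPreserving Γ) : mapInner (hermPart Ψ) Γ = (mapInner Ψ Γ).re := by
  rw [hermPart, mapInner_smul_left, mapInner_add_left, mapInner_conjMap Ψ hΓ, Complex.star_def,
    Complex.add_conj]
  push_cast
  ring

theorem ProperCone.mem_iff_forall_mem_dualCone (K : ProperCone ℝ (MatC a →ₗ[ℂ] MatC b))
    (hK : ∀ Γ ∈ K, HermPreserving Γ) {Φ : MatC a →ₗ[ℂ] MatC b} (hΦ : HermPreserving Φ) :
    Φ ∈ K ↔ ∀ Ψ ∈ dualCone (K : Set (MatC a →ₗ[ℂ] MatC b)), 0 ≤ mapInner Ψ Φ := by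
  refine ⟨fun hΦK Ψ hΨ => hΨ.2 Φ hΦK, fun h => ?_⟩
  by_contra hΦK
  obtain ⟨f, hfK, hfΦ⟩ := K.hyperplane_separation_point hΦK
  set Ψ := (reMapInner.toDual reMapInner_nondegenerate).symm f.toLinearMap
  have hΨ (Γ : MatC a →ₗ[ℂ] MatC b) : (mapInner Ψ Γ).re = f Γ :=
    LinearMap.BilinForm.apply_toDual_symm_apply (hB := reMapInner_nondegenerate) _ Γ
  have hdual : hermPart Ψ ∈ dualCone (K : Set (MatC a →ₗ[ℂ] MatC b)) := by
    refine ⟨hermPreserving_hermPart Ψ, fun Γ hΓ => ?_⟩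
    rw [mapInner_hermPart Ψ (hK Γ hΓ), hΨ]
    exact_mod_cast hfK Γ hΓ
  have hΦΨ := h _ hdual
  rw [mapInner_hermPart Ψ hΦ, hΨ] at hΦΨ
  exact hfΦ.not_ge (by exact_mod_cast hΦΨ)

end Duality

namespace IsMcsCone

variable {a b : ℕ} {C : Set (MatC a →ₗ[ℂ] MatC b)}

def toProperCone (hC : IsMcsCone C) : ProperCone ℝ (MatC a →ₗ[ℂ] MatC b) where
  carrier := C
  add_mem' hΦ hΨ := hC.2.2.1 _ hΦ _ hΨ
  zero_mem' := by
    obtain ⟨Φ, hΦ, -⟩ := hC.1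
    simpa using hC.2.2.2.1 Φ hΦ 0 le_rfl
  smul_mem' c Φ hΦ := by
    have hc : ((c : ℝ) : ℂ) • Φ = c • Φ := algebraMap_smul ℂ (c : ℝ) Φ
    exact hc ▸ hC.2.2.2.1 Φ hΦ c c.2
  isClosed' := hC.2.1

lemma mem_iff_forall_mem_dualCone (hC : IsMcsCone C) {Φ : MatC a →ₗ[ℂ] MatC b}
    (hΦ : HermPreserving Φ) : Φ ∈ C ↔ ∀ Ψ ∈ dualCone C, 0 ≤ mapInner Ψ Φ :=
  hC.toProperCone.mem_iff_forall_mem_dualCone (fun Γ hΓ => (hC.2.2.2.2.1 Γ hΓ).hermPreserving) hΦ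

lemma comp_adMap_mem (hC : IsMcsCone C) {Φ : MatC a →ₗ[ℂ] MatC b} (hΦ : Φ ∈ C)
    (V : Matrix (Fin a) (Fin a) ℂ) : Φ ∘ₗ adMap V ∈ C := by
  simpa using hC.2.2.2.2.2 Φ hΦ _ isCompletelyPositive_id _ (isCompletelyPositive_adMap V)

lemma adMap_comp_mem (hC : IsMcsCone C) {Φ : MatC a →ₗ[ℂ] MatC b} (hΦ : Φ ∈ C)
    (V : Matrix (Fin b) (Fin b) ℂ) : adMap V ∘ₗ Φ ∈ C := by
  simpa using hC.2.2.2.2.2 Φ hΦ _ (isCompletelyPositive_adMap V) _ isCompletelyPositive_id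

end IsMcsCone

/-- Main theorem: for an mcs-cone `C` and Hermiticity-preserving `Φ`,
`Φ ∈ C` iff `Ψ*∘Φ` is CP for all `Ψ ∈ C°`, iff `Φ∘Ψ*` is CP for all `Ψ ∈ C°`. -/
theorem stmt11 {m n : ℕ} (C : Set (MatC m →ₗ[ℂ] MatC n)) (hC : IsMcsCone C)
    (Φ : MatC m →ₗ[ℂ] MatC n) (hΦ : HermPreserving Φ) :
    (Φ ∈ C ↔ ∀ Ψ ∈ dualCone C, IsCompletelyPositive (adjointMap Ψ ∘ₗ Φ)) ∧
    (Φ ∈ C ↔ ∀ Ψ ∈ dualCone C, IsCompletelyPositive (Φ ∘ₗ adjointMap Ψ)) := by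
  refine ⟨⟨fun hΦC Ψ hΨ => ?_, fun h => (hC.mem_iff_forall_mem_dualCone hΦ).2 fun Ψ hΨ => ?_⟩,
    ⟨fun hΦC Ψ hΨ => ?_, fun h => (hC.mem_iff_forall_mem_dualCone hΦ).2 fun Ψ hΨ => ?_⟩⟩
  · refine isCompletelyPositive_iff_forall_trace_adMap_comp_nonneg.2 fun V => ?_
    rw [LinearMap.trace_comp_comm', LinearMap.comp_assoc, trace_adjointMap_comp, star_nonneg_iff]
    exact hΨ.2 _ (hC.comp_adMap_mem hΦC V)
  · rw [← star_nonneg_iff, ← trace_adjointMap_comp]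
    exact trace_nonneg_of_isCompletelyPositive (h Ψ hΨ)
  · refine isCompletelyPositive_iff_forall_trace_adMap_comp_nonneg.2 fun V => ?_
    rw [← LinearMap.comp_assoc, LinearMap.trace_comp_comm', trace_adjointMap_comp, star_nonneg_iff]
    exact hΨ.2 _ (hC.adMap_comp_mem hΦC V)
  · rw [← star_nonneg_iff, ← trace_adjointMap_comp, LinearMap.trace_comp_comm']
    exact trace_nonneg_of_isCompletelyPositive (h Ψ hΨ)
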